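/- arXiv:1508.05515 — 6 statements merged into one kernel-verified Lean document; each statement's English description precedes it below -/
import Mathlib

section
/- If G is a k-connected graph, S is a separator of G with |S| = k, and C is the vertex set of a connected component of G − S, then the graph obtained from the induced subgraph G[C ∪ S] by adding all edges between pairs of vertices of S (making S a clique) is also k-connected. -/
open scoped Classical
open EuclideanGeometry Real

noncomputable section

/-- Points in the Euclidean plane. -/
abbrev Pt := EuclideanSpace ℝ (Fin 2)

/-- A graph is `k`-connected if it has more than `k` vertices and remains connected
after deleting any fewer than `k` vertices. -/
def KConnected {V : Type*} [Fintype V] (k : ℕ) (G : SimpleGraph V) : Prop :=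
  k < Fintype.card V ∧ ∀ S : Finset V, S.card < k → (G.induce {v : V | v ∉ S}).Connected

/-- `G` is a unit disk graph realized by the (injective) point placement `p`:
two distinct vertices are adjacent iff their Euclidean distance is at most 1. -/
def IsUnitDiskGraph {V : Type*} (G : SimpleGraph V) (p : V → Pt) : Prop :=
  Function.Injective p ∧ ∀ u v, G.Adj u v ↔ u ≠ v ∧ dist (p u) (p v) ≤ 1

/-- Euclidean length of an edge. -/
def edgeLen {V : Type*} (p : V → Pt) : Sym2 V → ℝ :=
  Sym2.lift ⟨fun a b => dist (p a) (p b), fun a b => dist_comm (p a) (p b)⟩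

/-- Total Euclidean edge length of a graph. -/
def glen {V : Type*} [Fintype V] (p : V → Pt) (G : SimpleGraph V) : ℝ :=
  ∑ e ∈ G.edgeFinset, edgeLen p e

/-- `F` is a minimum-length `k`-connected spanning subgraph (`k`-MSS) of `G`. -/
def IsMSS {V : Type*} [Fintype V] (k : ℕ) (p : V → Pt) (G F : SimpleGraph V) : Prop :=
  F ≤ G ∧ KConnected k F ∧
    ∀ F' : SimpleGraph V, F' ≤ G → KConnected k F' → glen p F ≤ glen p F'

/-- The complete graph on the vertices of `S` (as a graph on all of `V`). -/
def cliqueOn {V : Type*} (S : Finset V) : SimpleGraph V where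
  Adj u v := u ≠ v ∧ u ∈ S ∧ v ∈ S
  symm := ⟨by rintro u v ⟨h, hu, hv⟩; exact ⟨h.symm, hv, hu⟩⟩
  loopless := ⟨by rintro u ⟨h, _⟩; exact h rfl⟩

/-!
Let `M = G ⊔ K_S` and delete a set `T` of fewer than `k` vertices from `M[C ∪ S]`. Since
`|S| = k`, some `s₀ ∈ S` survives, and `G − T` is connected. A path of `G − T` from a
surviving vertex `v ∈ C ∪ S` to `s₀` stays inside `C ∪ S` until it first meets `S`, because
every `G`-neighbour of `C` lies in `C ∪ S`. So `v` reaches a surviving vertex of `S`, and the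
surviving vertices of `S` form a clique of `M`.
-/

namespace SimpleGraph

variable {V : Type*} {G : SimpleGraph V}

def induceInduceIso (G : SimpleGraph V) (s : Set V) (t : Set s) :
    (G.induce s).induce t ≃g G.induce (Subtype.val '' t) where
  toEquiv := Equiv.Set.image Subtype.val t Subtype.val_injective
  map_rel_iff' := Iff.rfl

theorem kConnected_induce_of_connected_induce_sdiff {k : ℕ} {s : Set V}
    [Fintype s] (hcard : k < Fintype.card s)
    (hconn : ∀ T : Finset V, T.card < k → (G.induce (s \ ↑T)).Connected) :
    KConnected k (G.induce s) := by
  refine ⟨hcard, fun T hT => ?_⟩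
  have himage :
      Subtype.val '' {w : s | w ∉ T} = s \ ↑(T.map (Function.Embedding.subtype _)) := by
    ext v
    simp only [Set.mem_image, Set.mem_ofPred_eq, Subtype.exists, exists_and_right,
      exists_eq_right, Finset.coe_map, Function.Embedding.coe_subtype, Set.mem_sdiff,
      SetLike.mem_coe, not_exists]
    exact ⟨fun ⟨hv, hT⟩ => ⟨hv, fun _ => hT⟩, fun ⟨hv, hT⟩ => ⟨hv, hT hv⟩⟩
  rw [(induceInduceIso G s _).connected_iff, himage]
  exact hconn _ (by rwa [Finset.card_map])

theorem ConnectedComponent.mem_or_mem_of_adj {s : Set V}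
    (c : (G.induce {v | v ∉ s}).ConnectedComponent) {u v : V}
    (hu : u ∈ Subtype.val '' c.supp) (huv : G.Adj u v) :
    v ∈ Subtype.val '' c.supp ∨ v ∈ s := by
  by_cases hv : v ∈ s
  · exact Or.inr hv
  · obtain ⟨x, hx, rfl⟩ := hu
    exact Or.inl ⟨⟨v, hv⟩, c.mem_supp_of_adj_mem_supp hx huv, rfl⟩

theorem Walk.exists_walk_to_mem_supported_in_union {X S : Set V}
    (hX : ∀ u ∈ X, ∀ v, G.Adj u v → v ∈ X ∨ v ∈ S) {a b : V} (p : G.Walk a b)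
    (ha : a ∈ X ∪ S) (hb : b ∈ S) :
    ∃ s ∈ S, ∃ q : G.Walk a s, ∀ x ∈ q.support, x ∈ p.support ∧ x ∈ X ∪ S := by
  induction p with
  | nil => exact ⟨_, hb, .nil, fun x hx => ⟨hx, List.mem_singleton.mp hx ▸ ha⟩⟩
  | @cons a c b hac p ih =>
    by_cases haS : a ∈ S
    · exact ⟨a, haS, .nil, fun x hx => by
      rw [List.mem_singleton.mp hx]; exact ⟨Walk.start_mem_support _, ha⟩⟩
    obtain ⟨s, hsS, q, hq⟩ := ih (hX a (ha.resolve_right haS) c hac) hb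
    refine ⟨s, hsS, .cons hac q, fun x hx => ?_⟩
    rcases List.mem_cons.mp hx with rfl | hx
    · exact ⟨Walk.start_mem_support _, ha⟩
    · exact ⟨List.mem_cons_of_mem _ (hq x hx).1, (hq x hx).2⟩

theorem connected_induce_sup_cliqueOn_sdiff {S : Finset V} {T : Set V}
    (c : (G.induce {v | v ∉ S}).ConnectedComponent) (hGT : (G.induce {v | v ∉ T}).Connected)
    {s₀ : V} (hs₀S : s₀ ∈ S) (hs₀T : s₀ ∉ T) :
    ((G ⊔ cliqueOn S).induce ((Subtype.val '' c.supp ∪ ↑S) \ T)).Connected := by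
  set A := (Subtype.val '' c.supp ∪ ↑S) \ T
  rw [connected_iff_exists_forall_reachable]
  refine ⟨⟨s₀, Or.inr hs₀S, hs₀T⟩, fun ⟨v, hv⟩ => ?_⟩
  obtain ⟨p⟩ := hGT.preconnected ⟨v, hv.2⟩ ⟨s₀, hs₀T⟩
  obtain ⟨s, hsS, q, hq⟩ :=
    (p.map (Embedding.induce _).toHom).exists_walk_to_mem_supported_in_union
      (fun _ hu _ huv => c.mem_or_mem_of_adj hu huv) hv.1 hs₀S
  have hqA : ∀ x ∈ q.support, x ∈ A := fun x hx => by
    obtain ⟨hxp, hxCS⟩ := hq x hx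
    rw [Walk.support_map, List.mem_map] at hxp
    obtain ⟨y, -, rfl⟩ := hxp
    exact ⟨hxCS, y.2⟩
  have hvs : ((G ⊔ cliqueOn S).induce A).Reachable ⟨v, hv⟩ ⟨s, hqA s q.end_mem_support⟩ :=
    (q.induce A hqA).reachable.mono fun _ _ => Or.inl
  refine Reachable.trans ?_ hvs.symm
  rcases eq_or_ne s₀ s with rfl | hs
  · rfl
  · exact Adj.reachable (Or.inr ⟨hs, hs₀S, hsS⟩)

end SimpleGraph

theorem Finset.card_lt_fintypeCard_union {V : Type*} (S : Finset V) {X : Set V}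
    [Fintype ↑(X ∪ ↑S)] {v : V} (hvX : v ∈ X) (hvS : v ∉ S) :
    S.card < Fintype.card ↑(X ∪ ↑S) := by
  rw [← Set.toFinset_card]
  refine Finset.card_lt_card (Finset.ssubset_iff.mpr ⟨v, hvS, fun x hx => ?_⟩)
  rw [Set.mem_toFinset]
  rcases Finset.mem_insert.mp hx with rfl | hx
  · exact Or.inl hvX
  · exact Or.inr hx

theorem marked_component_kconnected_general {V : Type*} [Fintype V] (k : ℕ) (G : SimpleGraph V)
    (hG : KConnected k G) (S : Finset V) (hcard : S.card = k)
    (comp : (G.induce {v : V | v ∉ S}).ConnectedComponent) (C : Set V)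
    (hC : C = Subtype.val '' comp.supp) :
    KConnected k ((G ⊔ cliqueOn S).induce (C ∪ ↑S)) := by
  obtain ⟨-, hGconn⟩ := hG
  subst hcard
  obtain ⟨v₀, hv₀⟩ := comp.exists_rep
  refine SimpleGraph.kConnected_induce_of_connected_induce_sdiff
    (S.card_lt_fintypeCard_union (hC ▸ ⟨v₀, hv₀, rfl⟩) v₀.2) fun T hT => ?_
  obtain ⟨s₀, hs₀S, hs₀T⟩ : ∃ s ∈ S, s ∉ T :=
    Finset.not_subset.mp fun hST => (Finset.card_le_card hST).not_gt hT
  rw [hC]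
  exact SimpleGraph.connected_induce_sup_cliqueOn_sdiff comp (hGconn T hT) hs₀S hs₀T

/-- If `G` is `k`-connected, `S` is a separator of `G` with `|S| = k`, and `C` is the
vertex set of a connected component of `G − S`, then the marked `S`-component
(`G[C ∪ S]` with `S` turned into a clique) is also `k`-connected. -/
theorem marked_component_kconnected {V : Type*} [Fintype V] (k : ℕ) (G : SimpleGraph V)
    (hG : KConnected k G) (S : Finset V) (hcard : S.card = k)
    (hsep : ¬ (G.induce {v : V | v ∉ S}).Connected)
    (comp : (G.induce {v : V | v ∉ S}).ConnectedComponent) (C : Set V)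
    (hC : C = Subtype.val '' comp.supp) :
    KConnected k ((G ⊔ cliqueOn S).induce (C ∪ ↑S)) :=
  marked_component_kconnected_general k G hG S hcard comp C hC
end
end

section
/- Let G be a k-connected unit disk graph and let F be a k-connected spanning subgraph of G whose total Euclidean edge length is minimum among all k-connected spanning subgraphs of G. Then for every edge uv of F and every neighbor u' of u in F with u' ≠ v and u'v ∉ E(F), if the angle ∠u'uv is less than π/3 and ‖uv‖ ≥ ‖uu'‖, then ‖u'v‖ < ‖uv‖ and u'v ∈ E(G). -/
open scoped Classical
open EuclideanGeometry Real

noncomputable section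

/-- In a minimum-length `k`-connected spanning subgraph `F` of a unit disk graph `G`:
for every edge `uv` of `F` and every neighbor `u'` of `u` in `F` with `u' ≠ v` and
`u'v ∉ E(F)`, if `∠u'uv < π/3` and `‖uv‖ ≥ ‖uu'‖`, then `‖u'v‖ < ‖uv‖` and `u'v ∈ E(G)`. -/
theorem mss_short_edge_swap {V : Type*} [Fintype V] (k : ℕ) (G F : SimpleGraph V)
    (p : V → Pt) (hudg : IsUnitDiskGraph G p) (hF : IsMSS k p G F)
    (u v u' : V) (huv : F.Adj u v) (huu' : F.Adj u u') (hne : u' ≠ v)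
    (hnadj : ¬ F.Adj u' v)
    (hang : ∠ (p u') (p u) (p v) < π / 3)
    (hlen : dist (p u) (p u') ≤ dist (p u) (p v)) :
    dist (p u') (p v) < dist (p u) (p v) ∧ G.Adj u' v := by
  have hinj := hudg.1
  have ha : (0:ℝ) < dist (p u) (p u') :=
    dist_pos.2 (fun h => huu'.ne (hinj h))
  have hb : (0:ℝ) < dist (p u) (p v) :=
    dist_pos.2 (fun h => huv.ne (hinj h))
  have hcos : (1:ℝ)/2 < Real.cos (∠ (p u') (p u) (p v)) := by
    have := Real.cos_lt_cos_of_nonneg_of_le_pi (angle_nonneg _ _ _)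
      (by linarith [Real.pi_pos] : π/3 ≤ π) hang
    rwa [Real.cos_pi_div_three] at this
  have hlc := EuclideanGeometry.law_cos (p u') (p u) (p v)
  rw [dist_comm (p u') (p u), dist_comm (p v) (p u)] at hlc
  have key : dist (p u') (p v) * dist (p u') (p v) <
      dist (p u) (p v) * dist (p u) (p v) := by
    nlinarith [mul_pos ha hb, mul_le_mul_of_nonneg_right hlen hb.le]
  have hlt : dist (p u') (p v) < dist (p u) (p v) := by
    nlinarith [dist_nonneg (x := p u') (y := p v)]
  refine ⟨hlt, (hudg.2 u' v).2 ⟨hne, ?_⟩⟩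
  have h1 : dist (p u) (p v) ≤ 1 := ((hudg.2 u v).1 (hF.1 huv)).2
  linarith
end
end

section
/- Let G be a 2-connected unit disk graph and F a 2-connected spanning subgraph of G with minimum total Euclidean edge length. If u is a vertex with degree at least 3 in F, then no two neighbors of u in F are adjacent to each other in F. -/
open scoped Classical
open EuclideanGeometry Real

noncomputable section

/-!
Let `u v u'` be a triangle of `F` and `w` a third neighbour of `u`. Since `F - u` is connected,
some walk from `w` to `v` avoids `u`; cut at whichever of `v`, `u'` it meets first and prefix the
edge `uw`. This gives a `u`–`v` walk avoiding `u'` and the edge `uv`, or a `u`–`u'` walk avoiding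
`v` and the edge `uu'`. In the first case `F - uv` is still 2-connected: once a vertex other than
`u'` is deleted the edge `uv` can be replaced by the path `u u' v`, and once `u'` is deleted by
that walk. As `p` is injective every edge has positive length, so `F - uv` (or `F - uu'`)
would be a shorter 2-connected spanning subgraph.
-/

namespace SimpleGraph

variable {V : Type*} {G : SimpleGraph V}

lemma Walk.reachable_induce {T : Set V} {a b : V} (w : G.Walk a b) (hw : ∀ c ∈ w.support, c ∈ T) :
    (G.induce T).Reachable ⟨a, hw a w.start_mem_support⟩ ⟨b, hw b w.end_mem_support⟩ :=
  (w.connected_induce_support.preconnected ⟨a, w.start_mem_support⟩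
    ⟨b, w.end_mem_support⟩).map (G.induceHomOfLE hw).toHom

lemma Reachable.exists_walk_of_induce {T : Set V} {a b : T} (h : (G.induce T).Reachable a b) :
    ∃ w : G.Walk a b, ∀ c ∈ w.support, c ∈ T := by
  obtain ⟨w⟩ := h
  have hw : ∀ c ∈ (w.map (Embedding.induce T).toHom).support, c ∈ T := by
    intro c hc
    rw [Walk.support_map, List.mem_map] at hc
    obtain ⟨c', -, rfl⟩ := hc
    exact c'.2
  exact ⟨_, hw⟩

lemma Reachable.of_forall_adj_reachable {H : SimpleGraph V}
    (h : ∀ x y, G.Adj x y → H.Reachable x y) {a b : V} (hab : G.Reachable a b) :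
    H.Reachable a b := by
  obtain ⟨w⟩ := hab
  induction w with
  | nil => rfl
  | cons hadj _ ih => exact (h _ _ hadj).trans ih

lemma Walk.exists_walk_avoiding_or {a b x : V} (q : G.Walk a b) (hxb : x ≠ b) :
    (∃ r : G.Walk a b, r.support ⊆ q.support ∧ x ∉ r.support) ∨
      ∃ r : G.Walk a x, r.support ⊆ q.support ∧ b ∉ r.support := by
  induction q with
  | nil => exact .inl ⟨nil, List.Subset.refl _, by simpa using hxb⟩
  | @cons a c b h q ih =>
    by_cases hxa : x = a
    · subst hxa
      exact .inr ⟨nil, by simp, by simpa [eq_comm] using hxb⟩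
    rcases ih hxb with ⟨r, hrq, hxr⟩ | ⟨r, hrq, hbr⟩
    · exact .inl ⟨cons h r, List.cons_subset_cons _ hrq, by simp [hxa, hxr]⟩
    · by_cases hba : b = a
      · subst hba
        exact .inl ⟨nil, by simp, by simpa using hxa⟩
      · exact .inr ⟨cons h r, List.cons_subset_cons _ hrq, by simp [hba, hbr]⟩

lemma exists_walk_deleteEdges_of_adj {u v w x : V} (huw : G.Adj u w) (hwv : w ≠ v) (hux : u ≠ x)
    (r : G.Walk w v) (hur : u ∉ r.support) (hxr : x ∉ r.support) :
    ∃ d : (G.deleteEdges {s(u, v)}).Walk u v, x ∉ d.support := by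
  have hedge : s(u, v) ∉ (Walk.cons huw r).edges := by
    rw [Walk.edges_cons, List.mem_cons, not_or]
    exact ⟨by simp [hwv.symm, huw.ne], fun h => hur (r.fst_mem_support_of_mem_edges h)⟩
  refine ⟨(Walk.cons huw r).toDeleteEdge _ hedge, ?_⟩
  rw [Walk.support_transfer]
  simp [hux.symm, hxr]

lemma connected_induce_deleteEdges {T : Set V} {u v : V} (hG : (G.induce T).Connected)
    (huv : ∀ (hu : u ∈ T) (hv : v ∈ T),
      ((G.deleteEdges {s(u, v)}).induce T).Reachable ⟨u, hu⟩ ⟨v, hv⟩) :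
    ((G.deleteEdges {s(u, v)}).induce T).Connected := by
  refine (connected_iff _).2
    ⟨fun a b => (hG.preconnected a b).of_forall_adj_reachable ?_, hG.nonempty⟩
  rintro ⟨x, hx⟩ ⟨y, hy⟩ hxy
  by_cases he : s(x, y) = s(u, v)
  · rcases Sym2.eq_iff.mp he with ⟨rfl, rfl⟩ | ⟨rfl, rfl⟩
    · exact huv hx hy
    · exact (huv hy hx).symm
  · exact Adj.reachable (deleteEdges_adj.mpr ⟨hxy, he⟩)

lemma exists_adj_ne_ne_of_three_le_degree {u : V} [Fintype (G.neighborSet u)]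
    (h : 3 ≤ G.degree u) (v x : V) : ∃ w, G.Adj u w ∧ w ≠ v ∧ w ≠ x := by
  have hcard : ({v, x} : Finset V).card < (G.neighborFinset u).card := by
    grw [Finset.card_le_two, card_neighborFinset_eq_degree]
    omega
  obtain ⟨w, hw, hwvx⟩ := Finset.exists_mem_notMem_of_card_lt_card hcard
  simp only [Finset.mem_insert, Finset.mem_singleton, not_or] at hwvx
  exact ⟨w, (mem_neighborFinset _ _ _).mp hw, hwvx⟩

end SimpleGraph

open SimpleGraph

section

variable {V : Type*} [Fintype V]

lemma KConnected.kConnected_deleteEdges_of_detour {F : SimpleGraph V} (hF : KConnected 2 F)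
    {u v u' : V} (huu' : F.Adj u u') (hvu' : F.Adj v u')
    (d : (F.deleteEdges {s(u, v)}).Walk u v) (hd : u' ∉ d.support) :
    KConnected 2 (F.deleteEdges {s(u, v)}) := by
  refine ⟨hF.1, fun S hS => connected_induce_deleteEdges (hF.2 S hS) fun hu hv => ?_⟩
  by_cases hu'S : u' ∈ S
  · -- `S = {u'}`, which the detour avoids
    have hdS : ∀ c ∈ d.support, c ∈ {x | x ∉ S} := fun c hc hcS =>
      hd (Finset.card_le_one.mp (Nat.lt_succ_iff.mp hS) c hcS u' hu'S ▸ hc)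
    exact d.reachable_induce hdS
  · have h1 : (F.deleteEdges {s(u, v)}).Adj u u' :=
      deleteEdges_adj.mpr ⟨huu', by simp [huu'.ne', hvu'.ne']⟩
    have h2 : (F.deleteEdges {s(u, v)}).Adj u' v :=
      deleteEdges_adj.mpr ⟨hvu'.symm, by simp [huu'.ne', hvu'.ne']⟩
    exact (Walk.cons h1 h2.toWalk).reachable_induce (by simpa [hu'S] using ⟨hu, hv⟩)

lemma KConnected.exists_detour {F : SimpleGraph V} (hF : KConnected 2 F) {u v u' w : V}
    (huv : F.Adj u v) (huu' : F.Adj u u') (huw : F.Adj u w) (hvu' : v ≠ u') (hwv : w ≠ v)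
    (hwu' : w ≠ u') :
    (∃ d : (F.deleteEdges {s(u, v)}).Walk u v, u' ∉ d.support) ∨
      ∃ d : (F.deleteEdges {s(u, u')}).Walk u u', v ∉ d.support := by
  obtain ⟨q, hq⟩ : ∃ q : F.Walk w v, ∀ c ∈ q.support, c ∈ {x | x ∉ ({u} : Finset V)} :=
    ((hF.2 {u} (by simp)).preconnected ⟨w, by simpa using huw.ne'⟩
      ⟨v, by simpa using huv.ne'⟩).exists_walk_of_induce
  have huq : u ∉ q.support := fun h => by simpa using hq u h
  rcases q.exists_walk_avoiding_or hvu'.symm with ⟨r, hrq, hu'r⟩ | ⟨r, hrq, hvr⟩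
  · exact .inl (exists_walk_deleteEdges_of_adj huw hwv huu'.ne r (fun h => huq (hrq h)) hu'r)
  · exact .inr (exists_walk_deleteEdges_of_adj huw hwu' huv.ne r (fun h => huq (hrq h)) hvr)

lemma KConnected.kConnected_deleteEdges_of_triangle {F : SimpleGraph V} (hF : KConnected 2 F)
    {u v u' : V} (hdeg : 3 ≤ F.degree u) (huv : F.Adj u v) (huu' : F.Adj u u')
    (hvu' : F.Adj v u') :
    KConnected 2 (F.deleteEdges {s(u, v)}) ∨ KConnected 2 (F.deleteEdges {s(u, u')}) := by
  obtain ⟨w, huw, hwv, hwu'⟩ := exists_adj_ne_ne_of_three_le_degree hdeg v u'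
  rcases hF.exists_detour huv huu' huw hvu'.ne hwv hwu' with ⟨d, hd⟩ | ⟨d, hd⟩
  · exact .inl (hF.kConnected_deleteEdges_of_detour huu' hvu' d hd)
  · exact .inr (hF.kConnected_deleteEdges_of_detour huv hvu'.symm d hd)

lemma glen_deleteEdges_singleton {F : SimpleGraph V} (p : V → Pt) {e : Sym2 V}
    (he : e ∈ F.edgeSet) : glen p (F.deleteEdges {e}) = glen p F - edgeLen p e := by
  rw [glen, glen, ← Finset.sum_erase_eq_sub (by simpa using he)]
  congr 1
  ext
  simp [and_comm]

lemma IsMSS.not_kConnected_deleteEdges {k : ℕ} {p : V → Pt} {G F : SimpleGraph V}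
    (hF : IsMSS k p G F) (hp : Function.Injective p) {u v : V} (huv : F.Adj u v) :
    ¬ KConnected k (F.deleteEdges {s(u, v)}) := fun hk => by
  have hpos : 0 < edgeLen p s(u, v) := dist_pos.mpr (hp.ne huv.ne)
  have hmin := hF.2.2 _ ((deleteEdges_le _).trans hF.1) hk
  rw [glen_deleteEdges_singleton p huv] at hmin
  linarith

end

theorem mss2_neighbors_nonadjacent_general {V : Type*} [Fintype V] (G F : SimpleGraph V)
    (p : V → Pt) (hudg : IsUnitDiskGraph G p)
    (hF : IsMSS 2 p G F) (u : V) (hdeg : 3 ≤ F.degree u) :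
    ∀ v u' : V, F.Adj u v → F.Adj u u' → ¬ F.Adj v u' := by
  intro v u' huv huu' hvu'
  rcases hF.2.1.kConnected_deleteEdges_of_triangle hdeg huv huu' hvu' with h | h
  · exact hF.not_kConnected_deleteEdges hudg.1 huv h
  · exact hF.not_kConnected_deleteEdges hudg.1 huu' h

/-- In a minimum-length 2-connected spanning subgraph `F` of a 2-connected unit disk
graph, if a vertex `u` has degree at least 3 in `F`, then no two neighbors of `u`
in `F` are adjacent in `F`. -/
theorem mss2_neighbors_nonadjacent {V : Type*} [Fintype V] (G F : SimpleGraph V)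
    (p : V → Pt) (hudg : IsUnitDiskGraph G p) (hG : KConnected 2 G)
    (hF : IsMSS 2 p G F) (u : V) (hdeg : 3 ≤ F.degree u) :
    ∀ v u' : V, F.Adj u v → F.Adj u u' → ¬ F.Adj v u' :=
  mss2_neighbors_nonadjacent_general G F p hudg hF u hdeg
end
end

section
/- Let G be a 2-connected unit disk graph and F a 2-connected spanning subgraph of G with minimum total Euclidean edge length. If a vertex u of F has degree at least 3 and has two neighbors v, u' in F with ∠vuu' = π/3, then ‖uv‖ = ‖uu'‖ (so v, u, u' form an equilateral triangle together with the segment vu'). -/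
open scoped Classical
open EuclideanGeometry Real

noncomputable section

/-!
Suppose `‖uv‖ < ‖uu'‖`. Since `∠vuu' = π/3`, the law of cosines gives `‖vu'‖ < ‖uu'‖ ≤ 1`, so
`vu'` is an edge of `G`. Remove from `F` the edge `uu'` and every edge at `v`. If `u` and `u'`
are still connected, exchanging `uu'` for `vu'` keeps `F` 2-connected and makes it shorter.
Otherwise, 2-connectivity of `F` yields paths avoiding `u` from a third neighbour of `u` and
from `u'` to `v`; they reach `v` through the components of `u` and of `u'`, which are disjoint,
so any single vertex misses one of them and `F` stays 2-connected without `uv`. Either way `F`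
was not minimal.
-/

theorem EuclideanGeometry.dist_lt_of_angle_eq_pi_div_three {E P : Type*}
    [NormedAddCommGroup E] [InnerProductSpace ℝ E] [MetricSpace P] [NormedAddTorsor E P]
    {a b c : P} (h : ∠ b a c = π / 3) (hlt : dist a b < dist a c) :
    dist b c < dist a c := by
  have hab : 0 < dist a b := by
    refine dist_pos.2 fun hab => ?_
    rw [← hab, angle_self_left] at h
    linarith [pi_pos]
  have hcos := law_cos b a c
  rw [h, cos_pi_div_three, dist_comm b a, dist_comm c a] at hcos
  nlinarith [mul_pos hab (sub_pos.2 hlt), dist_nonneg (x := b) (y := c)]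

namespace SimpleGraph

variable {V : Type*}

theorem exists_adj_ne_ne_of_three_le_degree_s6 {F : SimpleGraph V} {u : V}
    [Fintype (F.neighborSet u)] (hdeg : 3 ≤ F.degree u) (v w : V) :
    ∃ x, F.Adj u x ∧ x ≠ v ∧ x ≠ w := by
  have hcard : ({v, w} : Finset V).card < (F.neighborFinset u).card :=
    (Finset.card_le_two).trans_lt (by rwa [card_neighborFinset_eq_degree])
  obtain ⟨x, hx, hxvw⟩ := Finset.exists_mem_notMem_of_card_lt_card hcard
  simp only [Finset.mem_insert, Finset.mem_singleton, not_or] at hxvw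
  exact ⟨x, (mem_neighborFinset _ _ _).1 hx, hxvw⟩

theorem Reachable.of_forall_adj {G H : SimpleGraph V}
    (h : ∀ a b, G.Adj a b → H.Reachable a b) {a b : V} (hab : G.Reachable a b) :
    H.Reachable a b := by
  rw [reachable_eq_reflTransGen] at h hab ⊢
  exact Relation.ReflTransGen.lift' id h _ _ hab

theorem eq_of_reachable_of_forall_not_adj {H : SimpleGraph V} {r v : V}
    (hv : ∀ z, ¬ H.Adj z v) (hr : H.Reachable r v) : r = v := by
  obtain ⟨w⟩ := hr.symm
  cases w with
  | nil => rfl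
  | cons h _ => exact absurd h.symm (hv _)

theorem Reachable.exists_adj_reachable_deleteEdges {K : SimpleGraph V} {r v : V}
    (h : K.Reachable r v) (hrv : r ≠ v) :
    ∃ y, K.Adj y v ∧ (K.deleteEdges {e | v ∈ e}).Reachable r y := by
  obtain ⟨w⟩ := h
  induction w with
  | nil => exact absurd rfl hrv
  | @cons r b v hrb w ih =>
    by_cases hbv : b = v
    · exact ⟨r, hbv ▸ hrb, .rfl⟩
    · obtain ⟨y, hyv, hby⟩ := ih hbv
      have hrb' : (K.deleteEdges {e | v ∈ e}).Adj r b := by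
        simp [deleteEdges_adj, hrb, Sym2.mem_iff, Ne.symm hrv, Ne.symm hbv]
      exact ⟨y, hyv, hrb'.reachable.trans hby⟩

theorem reachable_induce_of_reachable {H K : SimpleGraph V} (hHK : H ≤ K) {s : Set V}
    {x y : V} (hxy : H.Reachable x y) (hs : ∀ z, H.Reachable x z → z ∈ s) (hx : x ∈ s)
    (hy : y ∈ s) : (K.induce s).Reachable ⟨x, hx⟩ ⟨y, hy⟩ := by
  obtain ⟨w⟩ := hxy
  have hw : Set.MapsTo id {z | z ∈ w.support} s := fun z hz => hs z ⟨w.takeUntil z hz⟩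
  exact (w.connected_induce_support.preconnected ⟨x, w.start_mem_support⟩
    ⟨y, w.end_mem_support⟩).map (induceHom (Hom.ofLE hHK) hw)

end SimpleGraph

open SimpleGraph

section Length

variable {V : Type*} (p : V → Pt)

theorem edgeLen_nonneg (e : Sym2 V) : 0 ≤ edgeLen p e := by
  induction e using Sym2.ind with
  | h x y => exact dist_nonneg (x := p x) (y := p y)

variable [Fintype V]

theorem glen_sup_le (K L : SimpleGraph V) : glen p (K ⊔ L) ≤ glen p K + glen p L := by
  rw [glen, glen, glen, ← Finset.sum_union_inter]
  refine (Finset.sum_congr ?_ fun _ _ => rfl).trans_le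
    (le_add_of_nonneg_right (Finset.sum_nonneg fun e _ => edgeLen_nonneg p e))
  ext
  simp

theorem glen_edge {x y : V} (hxy : x ≠ y) : glen p (edge x y) = dist (p x) (p y) := by
  simp [glen, edgeFinset, edgeSet_edge_of_ne hxy, edgeLen]

theorem glen_deleteEdges_singleton_s6 {K : SimpleGraph V} {x y : V} (hxy : K.Adj x y) :
    glen p (K.deleteEdges {s(x, y)}) = glen p K - dist (p x) (p y) := by
  have hmem : s(x, y) ∈ K.edgeFinset := by simpa using hxy
  rw [glen, glen, ← show edgeLen p s(x, y) = dist (p x) (p y) from rfl,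
    ← Finset.sum_erase_eq_sub hmem]
  refine Finset.sum_congr ?_ fun _ _ => rfl
  ext e
  simp [and_comm]

end Length

section Connectivity


open SimpleGraph

variable {V : Type*} [Fintype V]

theorem KConnected.reachable_deleteEdges {k : ℕ} {F : SimpleGraph V} (hF : KConnected k F)
    (hk : 1 < k) {w x y : V} (hx : x ≠ w) (hy : y ≠ w) :
    (F.deleteEdges {e | w ∈ e}).Reachable x y := by
  have hxy := (hF.2 {w} (by simpa using hk)).preconnected
    ⟨x, by simpa using hx⟩ ⟨y, by simpa using hy⟩
  refine hxy.map ⟨Subtype.val, ?_⟩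
  rintro ⟨a, ha⟩ ⟨b, hb⟩ hab
  have hwa : w ≠ a := by simpa [eq_comm] using ha
  have hwb : w ≠ b := by simpa [eq_comm] using hb
  exact (deleteEdges_adj ..).2 ⟨hab, by simp [Sym2.mem_iff, hwa, hwb]⟩

theorem KConnected.of_deleteEdges_le {k : ℕ} {F F' : SimpleGraph V} {a b : V}
    (hF : KConnected k F) (hle : F.deleteEdges {s(a, b)} ≤ F')
    (h : ∀ S : Finset V, S.card < k → ∀ (ha : a ∉ S) (hb : b ∉ S),
      (F'.induce {z | z ∉ S}).Reachable ⟨a, ha⟩ ⟨b, hb⟩) :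
    KConnected k F' := by
  refine ⟨hF.1, fun S hS => ?_⟩
  have hconn := hF.2 S hS
  have := hconn.nonempty
  refine ⟨fun x y => (hconn.preconnected x y).of_forall_adj ?_⟩
  rintro ⟨x, hx⟩ ⟨y, hy⟩ hxy
  by_cases he : s(x, y) = s(a, b)
  · rcases Sym2.eq_iff.1 he with ⟨rfl, rfl⟩ | ⟨rfl, rfl⟩
    exacts [h S hS hx hy, (h S hS hy hx).symm]
  · exact Adj.reachable (hle ((deleteEdges_adj ..).2 ⟨hxy, he⟩))

theorem KConnected.deleteEdges_sup_edge {F : SimpleGraph V} {u v u' : V} (hF : KConnected 2 F)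
    (huv : F.Adj u v) (hvu' : v ≠ u')
    (hH : (F.deleteEdges (insert s(u, u') {e | v ∈ e})).Reachable u u') :
    KConnected 2 (F.deleteEdges {s(u, u')} ⊔ edge v u') := by
  set H := F.deleteEdges (insert s(u, u') {e | v ∈ e})
  set F' := F.deleteEdges {s(u, u')} ⊔ edge v u'
  have hHF' : H ≤ F' :=
    (deleteEdges_anti (Set.singleton_subset_iff.2 (Set.mem_insert _ _))).trans le_sup_left
  refine hF.of_deleteEdges_le le_sup_left fun S hS hu hu' => ?_
  by_cases hv : v ∈ S
  · refine reachable_induce_of_reachable (s := {z | z ∉ S}) hHF' hH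
      (fun z hz hzS => huv.ne ?_) hu hu'
    have hzv : z = v := Finset.card_le_one.1 (by omega) z hzS v hv
    refine eq_of_reachable_of_forall_not_adj (fun t ht => ?_) (hzv ▸ hz)
    exact ((deleteEdges_adj ..).1 ht).2 (Set.mem_insert_of_mem _ (Sym2.mem_mk_right t v))
  · have hF'uv : F'.Adj u v :=
      Or.inl ((deleteEdges_adj ..).2 ⟨huv, fun h => hvu' (Sym2.congr_right.1 h)⟩)
    have hF'vu' : F'.Adj v u' := Or.inr ((edge_adj ..).2 ⟨Or.inl ⟨rfl, rfl⟩, hvu'⟩)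
    exact (induce_adj (s := {z | z ∉ S}) (u := ⟨u, hu⟩) (v := ⟨v, hv⟩) |>.2 hF'uv).reachable.trans
      (induce_adj.2 hF'vu').reachable

theorem KConnected.deleteEdges_of_not_reachable {F : SimpleGraph V} {u v u' x : V}
    (hF : KConnected 2 F) (huv : F.Adj u v) (huu' : F.Adj u u') (hux : F.Adj u x)
    (hvu' : v ≠ u') (hxv : x ≠ v) (hxu' : x ≠ u')
    (hH : ¬ (F.deleteEdges (insert s(u, u') {e | v ∈ e})).Reachable u u') :
    KConnected 2 (F.deleteEdges {s(u, v)}) := by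
  set H := F.deleteEdges (insert s(u, u') {e | v ∈ e})
  have hHle : H ≤ F.deleteEdges {s(u, v)} := deleteEdges_anti
    (Set.singleton_subset_iff.2 (Set.mem_insert_of_mem _ (Sym2.mem_mk_right u v)))
  have hentry : ∀ r, r ≠ u → r ≠ v → ∃ y, y ≠ u ∧ F.Adj y v ∧ H.Reachable r y := by
    intro r hru hrv
    obtain ⟨y, hyv, hry⟩ :=
      (hF.reachable_deleteEdges one_lt_two hru huv.ne').exists_adj_reachable_deleteEdges hrv
    rw [deleteEdges_adj] at hyv
    refine ⟨y, fun h => hyv.2 (h ▸ Sym2.mem_mk_left _ _), hyv.1, hry.mono ?_⟩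
    rw [deleteEdges_deleteEdges]
    exact deleteEdges_anti
      (Set.insert_subset (Or.inl (Sym2.mem_mk_left u u')) Set.subset_union_right)
  have hHux : H.Adj u x := by
    refine (deleteEdges_adj ..).2 ⟨hux, ?_⟩
    simp [hxu', Sym2.mem_iff, hxv.symm, hux.ne', huv.ne']
  have hadj : ∀ y, y ≠ u → F.Adj y v → (F.deleteEdges {s(u, v)}).Adj y v := fun y hyu hyv =>
    (deleteEdges_adj ..).2 ⟨hyv, by simp [hyu, hyv.ne]⟩
  obtain ⟨a, hau, hav, hxa⟩ := hentry x hux.ne' hxv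
  obtain ⟨b, hbu, hbv, hu'b⟩ := hentry u' huu'.ne' hvu'.symm
  refine hF.of_deleteEdges_le le_rfl fun S hS hu hv => ?_
  -- `S` has at most one vertex, and the components of `u` and `u'` in `H` are disjoint.
  by_cases hA : ∀ z, H.Reachable u z → z ∉ S
  · have hua := hHux.reachable.trans hxa
    exact (reachable_induce_of_reachable hHle hua hA hu (hA a hua)).trans
      (induce_adj.2 (hadj a hau hav)).reachable
  · push Not at hA
    obtain ⟨t, hut, htS⟩ := hA
    have hB : ∀ z, H.Reachable u' z → z ∉ S := fun z hz hzS =>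
      hH (hut.trans (Finset.card_le_one.1 (by omega) z hzS t htS ▸ hz).symm)
    have huu'F : (F.deleteEdges {s(u, v)}).Adj u u' :=
      (deleteEdges_adj ..).2 ⟨huu', fun h => hvu' (Sym2.congr_right.1 h).symm⟩
    exact ((induce_adj (s := {z | z ∉ S}) (u := ⟨u, hu⟩) (v := ⟨u', hB u' .rfl⟩) |>.2
      huu'F).reachable.trans (reachable_induce_of_reachable hHle hu'b hB _ (hB b hu'b))).trans
      (induce_adj.2 (hadj b hbu hbv)).reachable

end Connectivity

theorem IsMSS.dist_le_of_angle_eq_pi_div_three {V : Type*} [Fintype V] {G F : SimpleGraph V}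
    {p : V → Pt} (hudg : IsUnitDiskGraph G p) (hF : IsMSS 2 p G F) {u v u' : V}
    (hdeg : 3 ≤ F.degree u) (huv : F.Adj u v) (huu' : F.Adj u u') (hne : v ≠ u')
    (hang : ∠ (p v) (p u) (p u') = π / 3) :
    dist (p u) (p u') ≤ dist (p u) (p v) := by
  refine not_lt.1 fun hlt => ?_
  obtain ⟨hFG, hF2, hmin⟩ : F ≤ G ∧ KConnected 2 F ∧ _ := hF
  have hvu' := dist_lt_of_angle_eq_pi_div_three hang hlt
  have hGvu' : G.Adj v u' :=
    (hudg.2 v u').2 ⟨hne, hvu'.le.trans ((hudg.2 u u').1 (hFG huu')).2⟩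
  obtain ⟨x, hux, hxv, hxu'⟩ := exists_adj_ne_ne_of_three_le_degree_s6 hdeg v u'
  by_cases hH : (F.deleteEdges (insert s(u, u') {e | v ∈ e})).Reachable u u'
  · have hF'G := sup_le ((deleteEdges_le {s(u, u')}).trans hFG) ((edge_le_iff G).2 (.inr hGvu'))
    have hle := hmin _ hF'G (hF2.deleteEdges_sup_edge huv hne hH)
    have hsup := glen_sup_le p (F.deleteEdges {s(u, u')}) (edge v u')
    rw [glen_deleteEdges_singleton_s6 p huu', glen_edge p hne] at hsup
    linarith
  · have hle := hmin _ ((deleteEdges_le _).trans hFG)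
      (hF2.deleteEdges_of_not_reachable huv huu' hux hne hxv hxu' hH)
    rw [glen_deleteEdges_singleton_s6 p huv] at hle
    linarith [dist_pos.2 (hudg.1.ne huv.ne)]

theorem mss2_equilateral_general {V : Type*} [Fintype V] (G F : SimpleGraph V)
    (p : V → Pt) (hudg : IsUnitDiskGraph G p)
    (hF : IsMSS 2 p G F) (u v u' : V) (hdeg : 3 ≤ F.degree u)
    (huv : F.Adj u v) (huu' : F.Adj u u') (hne : v ≠ u')
    (hang : ∠ (p v) (p u) (p u') = π / 3) :
    dist (p u) (p v) = dist (p u) (p u') :=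
  le_antisymm (hF.dist_le_of_angle_eq_pi_div_three hudg hdeg huu' huv hne.symm
    (by rwa [angle_comm])) (hF.dist_le_of_angle_eq_pi_div_three hudg hdeg huv huu' hne hang)

/-- In a minimum-length 2-connected spanning subgraph `F` of a 2-connected unit disk
graph, if a vertex `u` of degree at least 3 has two neighbors `v`, `u'` with
`∠vuu' = π/3`, then `‖uv‖ = ‖uu'‖`. -/
theorem mss2_equilateral {V : Type*} [Fintype V] (G F : SimpleGraph V)
    (p : V → Pt) (hudg : IsUnitDiskGraph G p) (hG : KConnected 2 G)
    (hF : IsMSS 2 p G F) (u v u' : V) (hdeg : 3 ≤ F.degree u)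
    (huv : F.Adj u v) (huu' : F.Adj u u') (hne : v ≠ u')
    (hang : ∠ (p v) (p u) (p u') = π / 3) :
    dist (p u) (p v) = dist (p u) (p u') :=
  mss2_equilateral_general G F p hudg hF u v u' hdeg huv huu' hne hang
end
end

section
/- Let u, v, u' be three points in the plane with ∠u'uv < π/3 and ‖uv‖ ≥ ‖uu'‖. Then ‖u'v‖ < ‖uv‖. -/
open scoped Classical
open EuclideanGeometry Real

noncomputable section

/-- If `∠u'uv < π/3` and `‖uv‖ ≥ ‖uu'‖`, then `‖u'v‖ < ‖uv‖`. -/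
theorem dist_lt_of_angle_lt (u v u' : Pt) (hu' : u' ≠ u) (hv : v ≠ u)
    (hang : ∠ u' u v < π / 3) (hlen : dist u u' ≤ dist u v) :
    dist u' v < dist u v := by
  have hcos : Real.cos (π/3) < Real.cos (∠ u' u v) := by
    apply Real.cos_lt_cos_of_nonneg_of_le_pi (EuclideanGeometry.angle_nonneg _ _ _)
    · linarith [Real.pi_pos]
    · exact hang
  rw [Real.cos_pi_div_three] at hcos
  have ha : 0 < dist u u' := dist_pos.2 (Ne.symm hu')
  have hb : 0 < dist u v := dist_pos.2 (Ne.symm hv)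
  have hlaw := EuclideanGeometry.law_cos u' u v
  have hd : dist u' u = dist u u' := dist_comm _ _
  have hdv : dist v u = dist u v := dist_comm _ _
  rw [hd, hdv] at hlaw
  nlinarith [mul_pos ha hb, dist_nonneg (x := u') (y := v)]
end
end

section
/- Let G be a k-connected graph with vertex set V, let D ⊆ V be such that every vertex of V \ D has at least m ≥ k neighbors in D, and let OPT ⊆ V be a vertex set such that G[OPT] is k-connected and every vertex of V \ OPT has at least m neighbors in OPT. Then G[OPT ∪ D] is k-connected. -/
open scoped Classical

noncomputable section

/-! A vertex with at least `k` neighbours in a `k`-connected vertex set `A` can be added to `A`: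
after deleting fewer than `k` vertices one of those neighbours survives and links it to the
rest, which is still connected. Every vertex of `D` outside `OPT` has at least `m ≥ k`
neighbours in `OPT`, so adding them one at a time to `OPT` keeps `k`-connectivity. -/

open Finset SimpleGraph

def KConnectedOn {V : Type*} (k : ℕ) (G : SimpleGraph V) (A : Finset V) : Prop :=
  k < #A ∧ ∀ S : Finset V, #S < k → (G.induce ↑(A \ S)).Connected

section
variable {V : Type*} {G : SimpleGraph V} {k : ℕ}

theorem SimpleGraph.connected_induce_induce_iff (s : Set V) (t : Set s) :
    ((G.induce s).induce t).Connected ↔ (G.induce (Subtype.val '' t)).Connected := by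
  let f : (G.induce s).induce t ↪g G := (Embedding.induce s).comp (Embedding.induce t)
  have hf : Set.range f = Subtype.val '' t := by
    change Set.range (Subtype.val ∘ Subtype.val) = _
    rw [Set.range_comp, Subtype.range_coe]
  rw [← hf]
  exact f.isoInduceRange.connected_iff

theorem kConnected_induce_iff_kConnectedOn (A : Finset V) :
    KConnected k (G.induce ↑A) ↔ KConnectedOn k G A := by
  refine and_congr (by simp) ⟨fun h S hS => ?_, fun h S hS => ?_⟩
  · have hcard : #(S.subtype (· ∈ A)) < k :=
      ((card_subtype _ _).trans_le (card_filter_le _ _)).trans_lt hS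
    have hset : Subtype.val '' {v : A | v ∉ S.subtype (· ∈ A)} = ↑(A \ S) := by
      ext v
      simp [and_comm]
    rw [← hset, ← connected_induce_induce_iff]
    exact h _ hcard
  · have hset :
        Subtype.val '' {v : (A : Set V) | v ∉ S} = ↑(A \ S.map (Function.Embedding.subtype _)) := by
      ext v
      aesop
    rw [connected_induce_induce_iff, hset]
    exact h _ (by simpa using hS)

theorem KConnectedOn.insert_of_le_card_adj {A : Finset V} (hA : KConnectedOn k G A) {v : V}
    (hv : k ≤ #{u ∈ A | G.Adj v u}) : KConnectedOn k G (insert v A) := by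
  refine ⟨hA.1.trans_le (card_le_card (subset_insert v A)), fun S hS => ?_⟩
  by_cases hvS : v ∈ S
  · rw [insert_sdiff_of_mem _ hvS]
    exact hA.2 S hS
  obtain ⟨w, hw, hwS⟩ := exists_mem_notMem_of_card_lt_card (hS.trans_le hv)
  rw [mem_filter] at hw
  have hwAS : w ∈ (↑(A \ S) : Set V) := by simp [hw.1, hwS]
  have hsplit : (↑(insert v (A \ S)) : Set V) = {v, w} ∪ ↑(A \ S) := by
    rw [coe_insert, Set.insert_union, Set.singleton_union, Set.insert_eq_of_mem hwAS]
  rw [insert_sdiff_of_notMem _ hvS, hsplit]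
  exact induce_union_connected (induce_pair_connected_of_adj hw.2).preconnected
    (hA.2 S hS).preconnected ⟨w, by simp, hwAS⟩

theorem KConnectedOn.union_of_le_card_adj {A : Finset V} (hA : KConnectedOn k G A) (E : Finset V)
    (hE : ∀ v ∈ E, v ∉ A → k ≤ #{u ∈ A | G.Adj v u}) : KConnectedOn k G (A ∪ E) := by
  induction E using Finset.induction_on with
  | empty => rwa [union_empty]
  | insert a E _ ih =>
    rw [union_insert]
    have hAE := ih fun v hv => hE v (mem_insert_of_mem hv)
    by_cases ha : a ∈ A ∪ E
    · rwa [insert_eq_of_mem ha]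
    have haA : a ∉ A := fun h => ha (mem_union_left E h)
    refine hAE.insert_of_le_card_adj ((hE a (mem_insert_self a E) haA).trans ?_)
    exact card_le_card (filter_subset_filter _ subset_union_left)

end

theorem induce_union_kconnected_general {V : Type*} [Fintype V] (k m : ℕ)
    (hkm : k ≤ m) (G : SimpleGraph V) (D OPT : Finset V)
    (hOPTconn : KConnected k (G.induce ↑OPT))
    (hOPTdom : ∀ v ∉ OPT, m ≤ (OPT.filter (fun u => G.Adj v u)).card) :
    KConnected k (G.induce ↑(OPT ∪ D)) := by
  rw [kConnected_induce_iff_kConnectedOn] at hOPTconn ⊢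
  exact hOPTconn.union_of_le_card_adj D fun v _ hv => hkm.trans (hOPTdom v hv)

/-- If `G` is `k`-connected, every vertex outside `D` has at least `m ≥ k` neighbors
in `D`, `G[OPT]` is `k`-connected and every vertex outside `OPT` has at least `m`
neighbors in `OPT`, then `G[OPT ∪ D]` is `k`-connected. -/
theorem induce_union_kconnected {V : Type*} [Fintype V] (k m : ℕ) (hk : 0 < k)
    (hkm : k ≤ m) (G : SimpleGraph V) (hG : KConnected k G) (D OPT : Finset V)
    (hD : ∀ v ∉ D, m ≤ (D.filter (fun u => G.Adj v u)).card)
    (hOPTconn : KConnected k (G.induce ↑OPT))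
    (hOPTdom : ∀ v ∉ OPT, m ≤ (OPT.filter (fun u => G.Adj v u)).card) :
    KConnected k (G.induce ↑(OPT ∪ D)) :=
  induce_union_kconnected_general k m hkm G D OPT hOPTconn hOPTdom
end
end
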